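/- For any POVM resolution {(x,y)} of I_{d₁+d₂} as above, and any unit vector (x_t, y_t) with x_t ∈ ℂ^{d₁}, y_t ∈ ℂ^{d₂}, and any d₁×d₂ matrix H: if the pair (x_t,y_t) is drawn with probability ω = x_t†Ax_t + y_t†By_t (the null-hypothesis outcome probability), then E[(x_t†Hy_t)²/(x_t†Ax_t + y_t†By_t)²] ≤ ‖H‖_F²/b, where b is the smallest eigenvalue of B. -/

import Mathlib

/-!
Write `w = Hᴴ x`, so that `x† H y = w† y`. By Cauchy–Schwarz `|x† H y|² ≤ ‖w‖² ‖y‖²`, and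
since `A ≥ 0` and `B ≥ b`, the outcome probability satisfies `ω ≥ y† B y ≥ b ‖y‖²`; hence each
term `ω · |x† H y|² / ω²` is at most `‖Hᴴ x‖² / b`. Summing over the POVM, the upper-left block
`∑ x x† = I` of the resolution of identity gives `∑ ‖Hᴴ x‖² = tr (H (∑ x x†) Hᴴ) = ‖H‖_F²`.
-/

open Matrix

/-- A diagonal matrix is represented by its diagonal `A`; this is `v† diag(A) v`. -/
noncomputable def quadForm {d : ℕ} (A : Fin d → ℝ) (v : Fin d → ℂ) : ℝ :=
  ∑ j, A j * ‖v j‖ ^ 2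

open Finset

section Matrix

variable {𝕜 : Type*} [RCLike 𝕜] {m n ι : Type*}

theorem sum_vecMulVec_inl_eq_one [DecidableEq m] [DecidableEq n] [Fintype ι]
    (x : ι → m → 𝕜) (y : ι → n → 𝕜)
    (h : ∑ i, vecMulVec (Sum.elim (x i) (y i)) (star (Sum.elim (x i) (y i))) = 1) :
    ∑ i, vecMulVec (x i) (star (x i)) = 1 := by
  ext j j'
  simpa [Matrix.sum_apply, vecMulVec_apply, one_apply] using congrFun₂ h (.inl j) (.inl j')

variable [Fintype m] [Fintype n]

theorem ofReal_sum_norm_sq (w : n → 𝕜) : ((∑ k, ‖w k‖ ^ 2 : ℝ) : 𝕜) = star w ⬝ᵥ w := by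
  simp [dotProduct, RCLike.conj_mul]

theorem norm_star_dotProduct_sq_le (w v : n → 𝕜) :
    ‖star w ⬝ᵥ v‖ ^ 2 ≤ (∑ k, ‖w k‖ ^ 2) * ∑ k, ‖v k‖ ^ 2 := by
  have h := norm_inner_le_norm (𝕜 := 𝕜) (WithLp.toLp 2 w) (WithLp.toLp 2 v)
  rw [EuclideanSpace.inner_toLp_toLp, dotProduct_comm, EuclideanSpace.norm_eq,
    EuclideanSpace.norm_eq, ← sq_le_sq₀ (norm_nonneg _) (by positivity), mul_pow,
    Real.sq_sqrt (by positivity), Real.sq_sqrt (by positivity)] at h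
  exact h

theorem star_dotProduct_mulVec_eq (H : Matrix m n 𝕜) (x : m → 𝕜) (y : n → 𝕜) :
    star x ⬝ᵥ H *ᵥ y = star (Hᴴ *ᵥ x) ⬝ᵥ y := by
  rw [star_mulVec, conjTranspose_conjTranspose, dotProduct_mulVec]

theorem star_mulVec_dotProduct_eq_trace (H : Matrix m n 𝕜) (x : m → 𝕜) :
    star (Hᴴ *ᵥ x) ⬝ᵥ (Hᴴ *ᵥ x) = trace (H * Hᴴ * vecMulVec x (star x)) := by
  rw [← star_dotProduct_mulVec_eq, mul_vecMulVec, trace_vecMulVec, dotProduct_comm,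
    mulVec_mulVec]

theorem trace_mul_conjTranspose_self (H : Matrix m n 𝕜) :
    trace (H * Hᴴ) = ((∑ j, ∑ k, ‖H j k‖ ^ 2 : ℝ) : 𝕜) := by
  simp [trace, mul_apply, RCLike.mul_conj]

theorem sum_sum_norm_conjTranspose_mulVec_sq [DecidableEq m] [Fintype ι] (x : ι → m → 𝕜)
    (hx : ∑ i, vecMulVec (x i) (star (x i)) = 1) (H : Matrix m n 𝕜) :
    ∑ i, ∑ k, ‖(Hᴴ *ᵥ x i) k‖ ^ 2 = ∑ j, ∑ k, ‖H j k‖ ^ 2 := by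
  apply RCLike.ofReal_injective (K := 𝕜)
  rw [RCLike.ofReal_sum, ← trace_mul_conjTranspose_self, ← mul_one (H * Hᴴ), ← hx,
    Matrix.mul_sum, trace_sum]
  exact sum_congr rfl fun i _ => by rw [ofReal_sum_norm_sq, star_mulVec_dotProduct_eq_trace]

end Matrix

theorem quadForm_nonneg {d : ℕ} {A : Fin d → ℝ} (hA : ∀ j, 0 ≤ A j) (v : Fin d → ℂ) :
    0 ≤ quadForm A v :=
  sum_nonneg fun j _ => mul_nonneg (hA j) (by positivity)

theorem mul_sum_norm_sq_le_quadForm {d : ℕ} {B : Fin d → ℝ} {b : ℝ} (hB : ∀ k, b ≤ B k)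
    (v : Fin d → ℂ) : b * ∑ k, ‖v k‖ ^ 2 ≤ quadForm B v := by
  rw [mul_sum]
  exact sum_le_sum fun k _ => mul_le_mul_of_nonneg_right (hB k) (by positivity)

theorem mul_div_sq_le_div {ω c W Y b : ℝ} (hb : 0 < b) (hW : 0 ≤ W) (hω : 0 ≤ ω)
    (hc : c ≤ W * Y) (hYω : b * Y ≤ ω) : ω * (c / ω ^ 2) ≤ W / b := by
  rcases hω.eq_or_lt with rfl | hω
  · simpa using div_nonneg hW hb.le
  · rw [show ω * (c / ω ^ 2) = c / ω by field_simp, div_le_div_iff₀ hω hb]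
    nlinarith [mul_le_mul_of_nonneg_left hYω hW, mul_le_mul_of_nonneg_right hc hb.le]

/-- For a rank-1 POVM resolution `{(x i, y i)}` of `I_{d₁+d₂}`, measuring
the block-diagonal state `diag(A,B)` yields outcome `i` with probability
`ω i = (x i)†A(x i) + (y i)†B(y i)`; for any `d₁ × d₂` matrix `H`,
`E[ ‖x† H y‖² / (x†Ax + y†By)² ] ≤ ‖H‖_F² / b`, where `b` is the smallest eigenvalue
of `B`. -/
theorem stmt8 {d₁ d₂ : ℕ} {ι : Type*} [Fintype ι]
    (x : ι → Fin d₁ → ℂ) (y : ι → Fin d₂ → ℂ)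
    (hres : ∑ i, Matrix.vecMulVec (Sum.elim (x i) (y i)) (star (Sum.elim (x i) (y i)))
      = (1 : Matrix (Fin d₁ ⊕ Fin d₂) (Fin d₁ ⊕ Fin d₂) ℂ))
    (A : Fin d₁ → ℝ) (B : Fin d₂ → ℝ) (a b : ℝ) (ha : 0 < a) (hb : 0 < b)
    (hA : ∀ j, a ≤ A j) (hB : ∀ k, b ≤ B k)
    (H : Matrix (Fin d₁) (Fin d₂) ℂ) :
    ∑ i, (quadForm A (x i) + quadForm B (y i)) *
        (‖star (x i) ⬝ᵥ H.mulVec (y i)‖ ^ 2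
          / (quadForm A (x i) + quadForm B (y i)) ^ 2)
      ≤ (∑ j, ∑ k, ‖H j k‖ ^ 2) / b := by
  have hterm (i : ι) : (quadForm A (x i) + quadForm B (y i)) *
      (‖star (x i) ⬝ᵥ H.mulVec (y i)‖ ^ 2 / (quadForm A (x i) + quadForm B (y i)) ^ 2)
        ≤ (∑ k, ‖(Hᴴ *ᵥ x i) k‖ ^ 2) / b := by
    have hqA := quadForm_nonneg (fun j => ha.le.trans (hA j)) (x i)
    have hqB := mul_sum_norm_sq_le_quadForm hB (y i)
    have hY : 0 ≤ b * ∑ k, ‖y i k‖ ^ 2 := by positivity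
    refine mul_div_sq_le_div (Y := ∑ k, ‖y i k‖ ^ 2) hb (by positivity) (by linarith) ?_ (by linarith)
    rw [star_dotProduct_mulVec_eq]
    exact norm_star_dotProduct_sq_le _ _
  calc _ ≤ ∑ i, (∑ k, ‖(Hᴴ *ᵥ x i) k‖ ^ 2) / b := sum_le_sum fun i _ => hterm i
    _ = _ := by rw [← sum_div, sum_sum_norm_conjTranspose_mulVec_sq x
        (sum_vecMulVec_inl_eq_one x y hres) H]
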